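/- arXiv:1412.4452 — 2 statements merged into one kernel-verified Lean document; each statement's English description precedes it below -/
import Mathlib

section
/- Let M ∈ ℝ^{m×n}, q ∈ ℝᵐ and δ ≥ 0, and suppose the set {z ∈ ℝⁿ : ‖Mz − q‖ ≤ δ} is nonempty. If r = min { ‖z‖₀ : ‖Mz − q‖ ≤ δ } > 0, then there exists α > 0 such that for every z with ‖Mz − q‖ ≤ δ, the r-th largest component of |z| satisfies |z|ᵣ↓ > α. -/
/-- The Euclidean norm of a vector in `ℝᵐ`. -/
noncomputable def enorm {m : ℕ} (u : Fin m → ℝ) : ℝ := Real.sqrt (∑ i, u i ^ 2)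

/-- The zero-norm (number of nonzero components) of `z ∈ ℝⁿ`. -/
noncomputable def zeroNorm {n : ℕ} (z : Fin n → ℝ) : ℕ :=
  (Finset.univ.filter fun i => z i ≠ 0).card

/-! For every index set `T` with `#T < r`, the distance from `q` to the subspace `M(ℝ^T)` is attained
(finite dimension), so by minimality of `r` it exceeds `δ`; finitely many strict gaps leave a uniform
margin `ε > 0`. If a feasible `z` had fewer than `r` entries of modulus above `α = ε / (‖M‖ + 1)`,
zeroing its small entries would move `Mz` by less than `ε` and give a point of some such `M(ℝ^T)`
within `δ + ε` of `q`. -/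

open Finset Metric Filter Topology

section Support

variable {ι : Type*}

def supportedIn (T : Finset ι) : Submodule ℝ (ι → ℝ) :=
  Submodule.pi (↑T)ᶜ fun _ => ⊥

theorem mem_supportedIn {T : Finset ι} {z : ι → ℝ} : z ∈ supportedIn T ↔ ∀ i ∉ T, z i = 0 := by
  simp [supportedIn, Submodule.mem_pi]

theorem card_ne_zero_le_of_mem_supportedIn [Fintype ι] {T : Finset ι} {z : ι → ℝ}
    (hz : z ∈ supportedIn T) : #{i | z i ≠ 0} ≤ #T :=
  card_le_card fun i hi => by
    by_contra hiT
    exact (mem_filter.1 hi).2 (mem_supportedIn.1 hz i hiT)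

theorem indicator_mem_supportedIn (T : Finset ι) (z : ι → ℝ) :
    (T : Set ι).indicator z ∈ supportedIn T :=
  mem_supportedIn.2 fun _ hi => Set.indicator_of_notMem (by simpa using hi) z

theorem norm_sub_indicator_abs_gt_le [Fintype ι] {α : ℝ} (hα : 0 ≤ α) (z : ι → ℝ) :
    ‖z - (({i | α < |z i|} : Finset ι) : Set ι).indicator z‖ ≤ α := by
  rw [← Set.indicator_compl, pi_norm_le_iff_of_nonneg hα]
  intro i
  by_cases hi : α < |z i|
  · simp [hi, hα]
  · simpa [hi] using not_lt.1 hi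

end Support

theorem exists_pos_forall_add_lt {κ : Type*} [Finite κ] {p : κ → Prop} {δ : ℝ} {d : κ → ℝ}
    (h : ∀ k, p k → δ < d k) : ∃ ε > 0, ∀ k, p k → δ + ε < d k := by
  have hδ : Tendsto (fun ε => δ + ε) (𝓝[>] (0 : ℝ)) (𝓝 δ) :=
    (continuous_const_add δ).tendsto' 0 δ (add_zero δ) |>.mono_left nhdsWithin_le_nhds
  have hgap : ∀ᶠ ε in 𝓝[>] (0 : ℝ), ∀ k, p k → δ + ε < d k :=
    eventually_all.2 fun k => eventually_imp_distrib_left.2 fun hk =>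
      hδ.eventually_lt_const (h k hk)
  obtain ⟨ε, hε, hεpos⟩ := (hgap.and self_mem_nhdsWithin).exists
  exact ⟨ε, hεpos, hε⟩

section SparseFeasibility

variable {ι E : Type*} [Fintype ι] [NormedAddCommGroup E] [NormedSpace ℝ E]
  [FiniteDimensional ℝ E] (A : (ι → ℝ) →L[ℝ] E) (b : E) {δ : ℝ} {r : ℕ}

theorem exists_mem_supportedIn_dist_eq_infDist (T : Finset ι) :
    ∃ z ∈ supportedIn T, infDist b (A '' supportedIn T) = dist b (A z) := by
  have hclosed : IsClosed (A '' supportedIn T) := by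
    simpa using ((supportedIn T).map (A : (ι → ℝ) →ₗ[ℝ] E)).closed_of_finiteDimensional
  obtain ⟨_, ⟨z, hz, rfl⟩, hdist⟩ :=
    hclosed.exists_infDist_eq_dist ⟨A 0, 0, zero_mem _, rfl⟩ b
  exact ⟨z, hz, hdist⟩

theorem lt_infDist_of_card_lt (hr : ∀ z, dist (A z) b ≤ δ → r ≤ #{i | z i ≠ 0})
    {T : Finset ι} (hT : #T < r) :
    δ < infDist b (A '' supportedIn T) := by
  obtain ⟨z, hz, hdist⟩ := exists_mem_supportedIn_dist_eq_infDist A b T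
  by_contra! h
  have := hr z (by rwa [dist_comm, ← hdist])
  have := card_ne_zero_le_of_mem_supportedIn hz
  omega

theorem exists_pos_le_card_abs_gt (hr : ∀ z, dist (A z) b ≤ δ → r ≤ #{i | z i ≠ 0}) :
    ∃ α > 0, ∀ z, dist (A z) b ≤ δ → r ≤ #{i | α < |z i|} := by
  obtain ⟨ε, hε, hgap⟩ := exists_pos_forall_add_lt fun T (hT : #T < r) =>
    lt_infDist_of_card_lt A b hr hT
  refine ⟨ε / (‖A‖ + 1), by positivity, fun z hz => ?_⟩
  set α := ε / (‖A‖ + 1)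
  set T : Finset ι := {i | α < |z i|}
  by_contra! hT
  have hAα : ‖A‖ * α < ε := by
    rw [mul_div_assoc', div_lt_iff₀ (by positivity)]
    nlinarith
  refine (hgap T hT).not_ge ?_
  calc infDist b (A '' supportedIn T)
      ≤ dist b (A ((T : Set ι).indicator z)) :=
        infDist_le_dist_of_mem ⟨_, indicator_mem_supportedIn T z, rfl⟩
    _ ≤ dist (A z) b + dist (A z) (A ((T : Set ι).indicator z)) := dist_triangle_left _ _ _
    _ ≤ δ + ‖A‖ * α := by
      gcongr
      exact (A.dist_le_opNorm _ _).trans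
        (by gcongr; rw [dist_eq_norm]; exact norm_sub_indicator_abs_gt_le (by positivity) z)
    _ ≤ δ + ε := by linarith

end SparseFeasibility

noncomputable def Matrix.mulVecEuclideanCLM {m n : ℕ} (M : Matrix (Fin m) (Fin n) ℝ) :
    (Fin n → ℝ) →L[ℝ] EuclideanSpace ℝ (Fin m) :=
  LinearMap.toContinuousLinearMap
    ((WithLp.linearEquiv 2 ℝ (Fin m → ℝ)).symm.toLinearMap ∘ₗ M.mulVecLin)

theorem enorm_mulVec_sub_eq_dist {m n : ℕ} (M : Matrix (Fin m) (Fin n) ℝ) (q : Fin m → ℝ)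
    (z : Fin n → ℝ) :
    _root_.enorm (M.mulVec z - q) = dist (M.mulVecEuclideanCLM z) (WithLp.toLp 2 q) := by
  rw [EuclideanSpace.dist_eq]
  simp [_root_.enorm, Matrix.mulVecEuclideanCLM, Real.dist_eq, sq_abs]

theorem rth_largest_bounded_below_general {m n : ℕ} (M : Matrix (Fin m) (Fin n) ℝ)
    (q : Fin m → ℝ) (δ : ℝ)
    (r : ℕ)
    (hr : IsLeast {k : ℕ | ∃ z : Fin n → ℝ, _root_.enorm (M.mulVec z - q) ≤ δ ∧ zeroNorm z = k} r) :
    ∃ α > (0 : ℝ), ∀ z : Fin n → ℝ, _root_.enorm (M.mulVec z - q) ≤ δ →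
      r ≤ (Finset.univ.filter fun i => α < |z i|).card := by
  simp only [enorm_mulVec_sub_eq_dist] at hr ⊢
  exact exists_pos_le_card_abs_gt _ _ fun z hz => hr.2 ⟨z, hz, rfl⟩

/-- if `r = min { ‖z‖₀ : ‖Mz − q‖ ≤ δ } > 0`, then there is `α > 0` such that
for every feasible `z`, the `r`-th largest component of `|z|` exceeds `α`; equivalently,
at least `r` components of `|z|` are greater than `α`. -/
theorem rth_largest_bounded_below {m n : ℕ} (M : Matrix (Fin m) (Fin n) ℝ)
    (q : Fin m → ℝ) (δ : ℝ) (hδ : 0 ≤ δ)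
    (hne : ∃ z : Fin n → ℝ, _root_.enorm (M.mulVec z - q) ≤ δ)
    (r : ℕ) (hrpos : 0 < r)
    (hr : IsLeast {k : ℕ | ∃ z : Fin n → ℝ, _root_.enorm (M.mulVec z - q) ≤ δ ∧ zeroNorm z = k} r) :
    ∃ α > (0 : ℝ), ∀ z : Fin n → ℝ, _root_.enorm (M.mulVec z - q) ≤ δ →
      r ≤ (Finset.univ.filter fun i => α < |z i|).card :=
  rth_largest_bounded_below_general M q δ r hr
end

section
/- Assume the feasible set {x ∈ ℝⁿ : ‖Ax − b‖ ≤ δ} is nonempty. Then there exists a constant ρ̄ > 0 such that for all ρ > ρ̄, the set of globally optimal solutions of the MPEC problem min { ⟨e, e − v⟩ : ‖Ax − b‖ ≤ δ, ⟨v, |x|⟩ = 0, 0 ≤ v ≤ e } coincides with the set of globally optimal solutions of the penalty problem min { ⟨e, e − v⟩ + ρ⟨v, |x|⟩ : ‖Ax − b‖ ≤ δ, 0 ≤ v ≤ e }. -/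
/-- Feasibility for the MPEC problem. -/
noncomputable def MPECFeasible {m n : ℕ} (A : Matrix (Fin m) (Fin n) ℝ) (b : Fin m → ℝ)
    (δ : ℝ) (p : (Fin n → ℝ) × (Fin n → ℝ)) : Prop :=
  _root_.enorm (A.mulVec p.1 - b) ≤ δ ∧ (∑ i, p.2 i * |p.1 i|) = 0 ∧ ∀ i, 0 ≤ p.2 i ∧ p.2 i ≤ 1

/-- Feasibility for the penalty problem. -/
noncomputable def PenFeasible {m n : ℕ} (A : Matrix (Fin m) (Fin n) ℝ) (b : Fin m → ℝ)
    (δ : ℝ) (p : (Fin n → ℝ) × (Fin n → ℝ)) : Prop :=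
  _root_.enorm (A.mulVec p.1 - b) ≤ δ ∧ ∀ i, 0 ≤ p.2 i ∧ p.2 i ≤ 1

/-- Objective of the MPEC problem. -/
noncomputable def mpecObj {n : ℕ} (p : (Fin n → ℝ) × (Fin n → ℝ)) : ℝ := ∑ i, (1 - p.2 i)

/-- Objective of the penalty problem with parameter `ρ`. -/
noncomputable def penObj {n : ℕ} (ρ : ℝ) (p : (Fin n → ℝ) × (Fin n → ℝ)) : ℝ :=
  (∑ i, (1 - p.2 i)) + ρ * ∑ i, p.2 i * |p.1 i|

open Finset

theorem minimizers_eq_of_exact_relaxation {α : Type*} {P Q : α → Prop} {f g : α → ℝ} {k : ℝ}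
    (hPQ : ∀ p, P p → Q p) (hfg : ∀ p, P p → f p = g p) (hg : ∀ q, Q q → k ≤ g q)
    (hattain : ∃ p, P p ∧ f p ≤ k) (hQP : ∀ q, Q q → g q ≤ k → P q) :
    {p | P p ∧ ∀ q, P q → f p ≤ f q} = {p | Q p ∧ ∀ q, Q q → g p ≤ g q} := by
  obtain ⟨p₀, hp₀, hfp₀⟩ := hattain
  ext p
  constructor
  · rintro ⟨hp, hmin⟩
    refine ⟨hPQ p hp, fun q hq => ?_⟩
    calc g p = f p := (hfg p hp).symm
      _ ≤ k := (hmin p₀ hp₀).trans hfp₀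
      _ ≤ g q := hg q hq
  · rintro ⟨hp, hmin⟩
    have hgp : g p ≤ k := calc
      g p ≤ g p₀ := hmin p₀ (hPQ p₀ hp₀)
      _ = f p₀ := (hfg p₀ hp₀).symm
      _ ≤ k := hfp₀
    refine ⟨hQP p hp hgp, fun q hq => ?_⟩
    calc f p = g p := hfg p (hQP p hp hgp)
      _ ≤ k := hgp
      _ ≤ g q := hg q (hPQ q hq)
      _ = f q := (hfg q hq).symm

section Sparsity

variable {ι : Type*} [Fintype ι]

noncomputable def l0Norm (x : ι → ℝ) : ℕ := #{i | x i ≠ 0}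

def cappedL1 (ρ : ℝ) (x : ι → ℝ) : ℝ := ∑ i, min 1 (ρ * |x i|)

theorem l0Norm_le_card {y : ι → ℝ} {T : Finset ι} (hy : ∀ i ∉ T, y i = 0) :
    l0Norm y ≤ #T :=
  card_le_card fun i hi => by_contra fun hiT => (mem_filter.1 hi).2 (hy i hiT)

theorem isClosed_image_setOf_l0Norm_lt {E : Type*} [NormedAddCommGroup E] [NormedSpace ℝ E]
    (L : (ι → ℝ) →ₗ[ℝ] E) (k : ℕ) : IsClosed (L '' {y | l0Norm y < k}) := by
  classical
  have hunion : {y : ι → ℝ | l0Norm y < k} =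
      ⋃ T ∈ {T : Finset ι | #T < k}, (Submodule.pi (↑T)ᶜ fun _ => ⊥ : Submodule ℝ (ι → ℝ)) := by
    ext y
    simp only [Set.mem_ofPred_eq, Set.mem_iUnion, SetLike.mem_coe, Submodule.mem_pi,
      Set.mem_compl_iff, Submodule.mem_bot, exists_prop]
    exact ⟨fun hy => ⟨({i | y i ≠ 0} : Finset ι), hy, fun i hi => by simpa using hi⟩,
      fun ⟨T, hT, hy⟩ => (l0Norm_le_card hy).trans_lt hT⟩
  rw [hunion, Set.image_iUnion₂]
  refine Set.Finite.isClosed_biUnion (Set.toFinite _) fun T _ => ?_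
  rw [← Submodule.map_coe]
  exact Submodule.closed_of_finiteDimensional _

theorem pi_norm_le_sum_norm {β : ι → Type*} [∀ i, SeminormedAddGroup (β i)] (z : ∀ i, β i) :
    ‖z‖ ≤ ∑ i, ‖z i‖ :=
  (pi_norm_le_iff_of_nonneg (by positivity)).2 fun i =>
    single_le_sum (f := fun i => ‖z i‖) (fun j _ => norm_nonneg _) (mem_univ i)

theorem exists_pos_le_norm_sub_of_l0Norm_lt {E : Type*} [NormedAddCommGroup E]
    [NormedSpace ℝ E] (L : (ι → ℝ) →ₗ[ℝ] E) {K : Set E} (hK : IsCompact K) {k : ℕ}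
    (hk : ∀ x, L x ∈ K → k ≤ l0Norm x) :
    ∃ η > 0, ∀ x y, L x ∈ K → l0Norm y < k → η ≤ ‖x - y‖ := by
  have hdisj : Disjoint K (L '' {y | l0Norm y < k}) := by
    refine Set.disjoint_left.2 fun u hu ⟨y, hy, hLy⟩ => ?_
    exact (hk y (hLy ▸ hu)).not_gt hy
  obtain ⟨ε, hε, hsep⟩ := Metric.exists_pos_forall_lt_edist hK
    (isClosed_image_setOf_l0Norm_lt L k) hdisj
  obtain ⟨M, hM, hLM⟩ := (LinearMap.toContinuousLinearMap L).bound
  refine ⟨ε / M, by positivity, fun x y hx hy => ?_⟩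
  have hεL : (ε : ℝ) < ‖L (x - y)‖ := by
    have hlt := hsep _ hx _ ⟨y, hy, rfl⟩
    rwa [edist_nndist, ENNReal.coe_lt_coe, ← NNReal.coe_lt_coe, coe_nndist, dist_eq_norm,
      ← map_sub] at hlt
  rw [div_le_iff₀ hM, mul_comm]
  exact hεL.le.trans (hLM (x - y))

theorem natCast_le_cappedL1 {k : ℕ} {ρ η : ℝ} {x : ι → ℝ} (hρ : 0 ≤ ρ) (hkρη : k ≤ ρ * η)
    (hx : ∀ y, l0Norm y < k → η ≤ ‖x - y‖) : (k : ℝ) ≤ cappedL1 ρ x := by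
  classical
  set S : Finset ι := {i | 1 ≤ ρ * |x i|}
  have hS : ∀ i, i ∈ S ↔ 1 ≤ ρ * |x i| := by simp [S]
  have hsplit : cappedL1 ρ x = #S + ρ * ∑ i ∈ Sᶜ, |x i| := by
    rw [cappedL1, ← sum_add_sum_compl S, mul_sum, card_eq_sum_ones, Nat.cast_sum]
    congr 1 <;> refine sum_congr rfl fun i hi => ?_
    · simpa using (hS i).1 hi
    · exact min_eq_right (not_le.1 fun h => mem_compl.1 hi ((hS i).2 h)).le
  rw [hsplit]
  by_cases hkS : k ≤ #S
  · exact le_add_of_le_of_nonneg (by exact_mod_cast hkS) (by positivity)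
  · set y : ι → ℝ := fun i => if i ∈ S then x i else 0
    have hy : l0Norm y < k :=
      (l0Norm_le_card fun i hi => if_neg hi).trans_lt (not_le.1 hkS)
    have hxy : ‖x - y‖ ≤ ∑ i ∈ Sᶜ, |x i| := by
      refine (pi_norm_le_sum_norm _).trans_eq ?_
      rw [← sum_add_sum_compl S, sum_eq_zero fun i hi => by simp [y, hi], zero_add]
      exact sum_congr rfl fun i hi => by simp [y, mem_compl.1 hi]
    calc (k : ℝ) ≤ ρ * η := hkρη
      _ ≤ ρ * ∑ i ∈ Sᶜ, |x i| := mul_le_mul_of_nonneg_left ((hx y hy).trans hxy) hρ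
      _ ≤ #S + ρ * ∑ i ∈ Sᶜ, |x i| := le_add_of_nonneg_left (Nat.cast_nonneg _)

theorem exists_natCast_le_cappedL1 {E : Type*} [NormedAddCommGroup E] [NormedSpace ℝ E]
    (L : (ι → ℝ) →ₗ[ℝ] E) {K : Set E} (hK : IsCompact K) {k : ℕ}
    (hk : ∀ x, L x ∈ K → k ≤ l0Norm x) :
    ∃ ρ > 0, ∀ x, L x ∈ K → (k : ℝ) ≤ cappedL1 ρ x := by
  obtain ⟨η, hη, hsep⟩ := exists_pos_le_norm_sub_of_l0Norm_lt L hK hk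
  -- `k + 1` rather than `k`, so that `ρ > 0` also when `k = 0`
  refine ⟨(k + 1) / η, by positivity, fun x hx => natCast_le_cappedL1 (η := η) (by positivity)
    ?_ fun y hy => hsep x y hx hy⟩
  rw [div_mul_cancel₀ _ hη.ne']
  linarith

end Sparsity

theorem toLp_mem_closedBall_iff {m : ℕ} (u v : Fin m → ℝ) (δ : ℝ) :
    WithLp.toLp 2 u ∈ Metric.closedBall (WithLp.toLp 2 v) δ ↔ _root_.enorm (u - v) ≤ δ := by
  rw [Metric.mem_closedBall, dist_eq_norm, ← WithLp.toLp_sub, EuclideanSpace.norm_eq]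
  simp [_root_.enorm]

section Penalty

variable {m n : ℕ} {A : Matrix (Fin m) (Fin n) ℝ} {b : Fin m → ℝ} {δ : ℝ}

theorem cappedL1_le_penObj (ρ : ℝ) {p : (Fin n → ℝ) × (Fin n → ℝ)}
    (hv : ∀ i, 0 ≤ p.2 i ∧ p.2 i ≤ 1) : cappedL1 ρ p.1 ≤ penObj ρ p := by
  rw [cappedL1, penObj, mul_sum, ← sum_add_distrib]
  refine sum_le_sum fun i _ => ?_
  obtain ⟨hv0, hv1⟩ := hv i
  have hv1' : 0 ≤ 1 - p.2 i := by linarith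
  calc min 1 (ρ * |p.1 i|)
        = (1 - p.2 i) * min 1 (ρ * |p.1 i|) + p.2 i * min 1 (ρ * |p.1 i|) := by ring
    _ ≤ (1 - p.2 i) * 1 + p.2 i * (ρ * |p.1 i|) := by
        gcongr
        exacts [min_le_left _ _, min_le_right _ _]
    _ = 1 - p.2 i + ρ * (p.2 i * |p.1 i|) := by ring

theorem penObj_eq_penObj_add (ρ ρ' : ℝ) (p : (Fin n → ℝ) × (Fin n → ℝ)) :
    penObj ρ p = penObj ρ' p + (ρ - ρ') * ∑ i, p.2 i * |p.1 i| := by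
  simp only [penObj]
  ring

theorem penObj_eq_mpecObj {p : (Fin n → ℝ) × (Fin n → ℝ)} (hp : MPECFeasible A b δ p)
    (ρ : ℝ) : penObj ρ p = mpecObj p := by
  rw [penObj, hp.2.1, mul_zero, add_zero, mpecObj]

theorem exists_mpecFeasible_mpecObj_eq {x : Fin n → ℝ}
    (hx : _root_.enorm (A.mulVec x - b) ≤ δ) :
    ∃ p, MPECFeasible A b δ p ∧ mpecObj p = l0Norm x := by
  classical
  refine ⟨(x, fun i => if x i = 0 then 1 else 0),
    ⟨hx, sum_eq_zero fun i _ => ?_, fun i => ?_⟩, ?_⟩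
  · by_cases h : x i = 0 <;> simp [h]
  · by_cases h : x i = 0 <;> simp [h]
  · rw [mpecObj, l0Norm, natCast_card_filter]
    exact sum_congr rfl fun i _ => by split_ifs <;> simp_all

theorem le_penObj_of_penFeasible {k ρ₀ ρ : ℝ}
    (hcap : ∀ x, _root_.enorm (A.mulVec x - b) ≤ δ → k ≤ cappedL1 ρ₀ x) (hρ : ρ₀ ≤ ρ)
    {q : (Fin n → ℝ) × (Fin n → ℝ)} (hq : PenFeasible A b δ q) : k ≤ penObj ρ q := by
  have hs : 0 ≤ ∑ i, q.2 i * |q.1 i| := sum_nonneg fun i _ => mul_nonneg (hq.2 i).1 (abs_nonneg _)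
  calc k ≤ cappedL1 ρ₀ q.1 := hcap _ hq.1
    _ ≤ penObj ρ₀ q := cappedL1_le_penObj ρ₀ hq.2
    _ ≤ penObj ρ q := by
        rw [penObj_eq_penObj_add ρ ρ₀]
        have := mul_nonneg (sub_nonneg.2 hρ) hs
        linarith

theorem mpecFeasible_of_penObj_le {k ρ₀ ρ : ℝ}
    (hcap : ∀ x, _root_.enorm (A.mulVec x - b) ≤ δ → k ≤ cappedL1 ρ₀ x) (hρ : ρ₀ < ρ)
    {q : (Fin n → ℝ) × (Fin n → ℝ)} (hq : PenFeasible A b δ q) (hle : penObj ρ q ≤ k) :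
    MPECFeasible A b δ q := by
  have hs : 0 ≤ ∑ i, q.2 i * |q.1 i| := sum_nonneg fun i _ => mul_nonneg (hq.2 i).1 (abs_nonneg _)
  have hk : k ≤ penObj ρ₀ q := (hcap _ hq.1).trans (cappedL1_le_penObj ρ₀ hq.2)
  rw [penObj_eq_penObj_add ρ ρ₀] at hle
  refine ⟨hq.1, le_antisymm ?_ hs, hq.2⟩
  nlinarith

end Penalty

theorem exact_penalty_general {m n : ℕ} (A : Matrix (Fin m) (Fin n) ℝ) (b : Fin m → ℝ)
    (δ : ℝ) (hne : ∃ x : Fin n → ℝ, _root_.enorm (A.mulVec x - b) ≤ δ) :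
    ∃ ρbar > (0 : ℝ), ∀ ρ > ρbar,
      {p : (Fin n → ℝ) × (Fin n → ℝ) | MPECFeasible A b δ p ∧
        ∀ q : (Fin n → ℝ) × (Fin n → ℝ), MPECFeasible A b δ q → mpecObj p ≤ mpecObj q} =
      {p : (Fin n → ℝ) × (Fin n → ℝ) | PenFeasible A b δ p ∧
        ∀ q : (Fin n → ℝ) × (Fin n → ℝ), PenFeasible A b δ q → penObj ρ p ≤ penObj ρ q} := by
  obtain ⟨xs, hxs, hxs_min⟩ := exists_minimalFor_of_wellFoundedLT _ l0Norm hne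
  have hk : ∀ x, _root_.enorm (A.mulVec x - b) ≤ δ → l0Norm xs ≤ l0Norm x := fun x hx =>
    (le_total (l0Norm x) (l0Norm xs)).elim (hxs_min hx) id
  let L := (WithLp.linearEquiv 2 ℝ (Fin m → ℝ)).symm.toLinearMap ∘ₗ A.mulVecLin
  have hL : ∀ x, L x ∈ Metric.closedBall (WithLp.toLp 2 b) δ ↔
      _root_.enorm (A.mulVec x - b) ≤ δ := fun x => toLp_mem_closedBall_iff _ _ δ
  obtain ⟨ρ₀, hρ₀, hcap⟩ := exists_natCast_le_cappedL1 L (isCompact_closedBall _ δ)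
    fun x hx => hk x ((hL x).1 hx)
  have hcap' := fun x hx => hcap x ((hL x).2 hx)
  refine ⟨ρ₀, hρ₀, fun ρ hρ => minimizers_eq_of_exact_relaxation (fun p hp => ⟨hp.1, hp.2.2⟩)
    (fun p hp => (penObj_eq_mpecObj hp ρ).symm) (fun q => le_penObj_of_penFeasible hcap' hρ.le)
    ?_ (fun q => mpecFeasible_of_penObj_le hcap' hρ)⟩
  obtain ⟨p, hp, hobj⟩ := exists_mpecFeasible_mpecObj_eq hxs
  exact ⟨p, hp, hobj.le⟩

/-- exact penalty: there is `ρ̄ > 0` such that for all `ρ > ρ̄`, the set of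
globally optimal solutions of the MPEC problem coincides with that of the penalty problem. -/
theorem exact_penalty {m n : ℕ} (A : Matrix (Fin m) (Fin n) ℝ) (b : Fin m → ℝ)
    (δ : ℝ) (hδ : 0 ≤ δ) (hne : ∃ x : Fin n → ℝ, _root_.enorm (A.mulVec x - b) ≤ δ) :
    ∃ ρbar > (0 : ℝ), ∀ ρ > ρbar,
      {p : (Fin n → ℝ) × (Fin n → ℝ) | MPECFeasible A b δ p ∧
        ∀ q : (Fin n → ℝ) × (Fin n → ℝ), MPECFeasible A b δ q → mpecObj p ≤ mpecObj q} =
      {p : (Fin n → ℝ) × (Fin n → ℝ) | PenFeasible A b δ p ∧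
        ∀ q : (Fin n → ℝ) × (Fin n → ℝ), PenFeasible A b δ q → penObj ρ p ≤ penObj ρ q} :=
  exact_penalty_general A b δ hne
end
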